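/- arXiv:0810.5490 — 17 statements merged into one kernel-verified Lean document; each statement's English description precedes it below -/
import Mathlib

section
/- Let ε, x, y, z, x̃, ỹ, z̃ be real numbers satisfying the Kahan–Hirota–Kimura discretization relations of the flow E₁: x̃ - x = -2ε x x̃, ỹ - y = -ε(x̃ y + x ỹ), z̃ - z = 4ε y ỹ + ε(x̃ z + x z̃). If 1 - ε²x² ≠ 0 and 1 - ε²x̃² ≠ 0, then (z̃ x̃ + ỹ²)/(1 - ε²x̃²) = (z x + y²)/(1 - ε²x²); that is, K̂₁(ε)(x,y,z) = (z x + y²)/(1 - ε²x²) is an integral of motion of the discrete system dE₁. -/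
/-!
Solving the linear implicit equations gives the explicit map
`x̃ = x / (1 + 2εx)`, `ỹ = y / (1 + 2εx)`, `z̃ = (z (1 + 3εx) + 4εy²) / ((1 - εx)(1 + 2εx))`.
Under it both the numerator `z x + y²` and the denominator `1 - ε²x² = (1 - εx)(1 + εx)` of `K̂₁`
are multiplied by the same factor `(1 + 3εx) / ((1 - εx)(1 + 2εx)²)`.
-/

section KahanE1

variable {K : Type*} [Field K] {ε x y z x' y' z' : K}

theorem kahanE1_x_step (h1 : x' - x = -2*ε*x*x') : x' * (1 + 2*ε*x) = x := by
  linear_combination h1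

theorem kahanE1_one_add_two_mul_ne_zero (h1 : x' - x = -2*ε*x*x') : 1 + 2*ε*x ≠ 0 := by
  intro hD
  have hx : x = 0 := by rw [← kahanE1_x_step h1, hD, mul_zero]
  simp [hx] at hD

theorem kahanE1_y_step (h1 : x' - x = -2*ε*x*x') (h2 : y' - y = -ε*(x'*y + x*y'))
    (hx : 1 + ε*x ≠ 0) : y' * (1 + 2*ε*x) = y := by
  have hxy : x' * y = x * y' :=
    mul_left_cancel₀ hx (by linear_combination y*h1 - x*h2)
  linear_combination h2 - ε*hxy

theorem kahanE1_z_step (h1 : x' - x = -2*ε*x*x') (h2 : y' - y = -ε*(x'*y + x*y'))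
    (h3 : z' - z = 4*ε*y*y' + ε*(x'*z + x*z')) (hx : 1 + ε*x ≠ 0) :
    z' * (1 - ε*x) * (1 + 2*ε*x) = z * (1 + 3*ε*x) + 4*ε*y^2 := by
  linear_combination (1 + 2*ε*x)*h3 + 4*ε*y*kahanE1_y_step h1 h2 hx + ε*z*kahanE1_x_step h1

theorem kahanE1_numerator_step (h1 : x' - x = -2*ε*x*x') (h2 : y' - y = -ε*(x'*y + x*y'))
    (h3 : z' - z = 4*ε*y*y' + ε*(x'*z + x*z')) (hx : 1 + ε*x ≠ 0) :
    (1 - ε*x) * (1 + 2*ε*x)^2 * (z'*x' + y'^2) = (1 + 3*ε*x) * (z*x + y^2) := by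
  have hX := kahanE1_x_step h1
  have hY := kahanE1_y_step h1 h2 hx
  have hZ := kahanE1_z_step h1 h2 h3 hx
  linear_combination (x'*(1 + 2*ε*x))*hZ + (z*(1 + 3*ε*x) + 4*ε*y^2)*hX
    + (1 - ε*x)*(y'*(1 + 2*ε*x) + y)*hY

theorem kahanE1_denominator_step (h1 : x' - x = -2*ε*x*x') :
    (1 + 2*ε*x)^2 * (1 - ε^2*x'^2) = (1 + ε*x) * (1 + 3*ε*x) := by
  linear_combination (-ε^2*(x'*(1 + 2*ε*x) + x)) * kahanE1_x_step h1

end KahanE1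

/-- The function `K̂₁(ε)(x,y,z) = (z x + y²)/(1 - ε²x²)` is an integral of motion
of the Kahan–Hirota–Kimura discretization `dE₁` of the flow `E₁`. -/
theorem dE1_K1_integral (ε x y z x' y' z' : ℝ)
    (h1 : x' - x = -2*ε*x*x')
    (h2 : y' - y = -ε*(x'*y + x*y'))
    (h3 : z' - z = 4*ε*y*y' + ε*(x'*z + x*z'))
    (hd : 1 - ε^2*x^2 ≠ 0) (hd' : 1 - ε^2*x'^2 ≠ 0) :
    (z'*x' + y'^2)/(1 - ε^2*x'^2) = (z*x + y^2)/(1 - ε^2*x^2) := by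
  have hfactor : (1 - ε*x) * (1 + ε*x) = 1 - ε^2*x^2 := by ring
  have hminus : 1 - ε*x ≠ 0 := left_ne_zero_of_mul (hfactor ▸ hd)
  have hplus : 1 + ε*x ≠ 0 := right_ne_zero_of_mul (hfactor ▸ hd)
  have hD := kahanE1_one_add_two_mul_ne_zero h1
  rw [div_eq_div_iff hd' hd]
  refine mul_left_cancel₀ (mul_ne_zero hminus (pow_ne_zero 2 hD)) ?_
  linear_combination (1 - ε^2*x^2) * kahanE1_numerator_step h1 h2 h3 hplus
    - (1 - ε*x) * (z*x + y^2) * kahanE1_denominator_step h1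
end

section
/- Let ε, x, y, z, x̃, ỹ, z̃ be real numbers satisfying the Kahan–Hirota–Kimura discretization relations of the flow E₂: x̃ - x = -2ε x x̃, ỹ - y = ε(x̃ y + x ỹ), z̃ - z = -4ε y ỹ + ε(x̃ z + x z̃). If 1 - ε²x² ≠ 0 and 1 - ε²x̃² ≠ 0, then x̃ ỹ/(1 - ε²x̃²) = x y/(1 - ε²x²) and (z̃ x̃ + ỹ²)/(1 - ε²x̃²) = (z x + y²)/(1 - ε²x²); that is, Ĥ₂(ε) = x y/(1 - ε²x²) and K̂₂(ε) = (z x + y²)/(1 - ε²x²) are integrals of motion of the discrete system dE₂. -/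
/-- The functions `Ĥ₂(ε) = x y/(1 - ε²x²)` and `K̂₂(ε) = (z x + y²)/(1 - ε²x²)`
are integrals of motion of the Kahan–Hirota–Kimura discretization `dE₂`. -/
theorem dE2_integrals (ε x y z x' y' z' : ℝ)
    (h1 : x' - x = -2*ε*x*x')
    (h2 : y' - y = ε*(x'*y + x*y'))
    (h3 : z' - z = -4*ε*y*y' + ε*(x'*z + x*z'))
    (hd : 1 - ε^2*x^2 ≠ 0) (hd' : 1 - ε^2*x'^2 ≠ 0) :
    x'*y'/(1 - ε^2*x'^2) = x*y/(1 - ε^2*x^2) ∧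
    (z'*x' + y'^2)/(1 - ε^2*x'^2) = (z*x + y^2)/(1 - ε^2*x^2) := by
  constructor
  · rw [div_eq_div_iff hd' hd]
    linear_combination (x'*(1+ε*x))*h2 + (y*(1+ε*x'))*h1
  · rw [div_eq_div_iff hd' hd]
    linear_combination (x'*(1+ε*x))*h3 + (z*(1+ε*x') - 2*ε*y*y')*h1 +
      (y'*(1+ε*x) + y*(1-ε*x'))*h2
end

section
/- Let ε, x, y, z, x̃, ỹ, z̃ be real numbers satisfying the Kahan–Hirota–Kimura discretization relations of the flow E₄: x̃ - x = -ε(x̃ z + x z̃), ỹ - y = ε(ỹ z + y z̃), z̃ - z = 2ε(x̃ x - ỹ y). Then x̃ ỹ/(1 + ε²(x̃² + ỹ²)) = x y/(1 + ε²(x² + y²)) and (x̃² + ỹ² + z̃²)/(1 + ε²(x̃² + ỹ²)) = (x² + y² + z²)/(1 + ε²(x² + y²)); that is, Ĥ₄(ε) = x y/(1 + ε²(x² + y²)) and K̂₄(ε) = (x² + y² + z²)/(2(1 + ε²(x² + y²))) are integrals of motion of the discrete system dE₄. -/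
/-- The functions `Ĥ₄(ε) = x y/(1 + ε²(x² + y²))` and
`K̂₄(ε) = (x² + y² + z²)/(2(1 + ε²(x² + y²)))` are integrals of motion of the
Kahan–Hirota–Kimura discretization `dE₄`. -/
theorem dE4_integrals (ε x y z x' y' z' : ℝ)
    (h1 : x' - x = -ε*(x'*z + x*z'))
    (h2 : y' - y = ε*(y'*z + y*z'))
    (h3 : z' - z = 2*ε*(x'*x - y'*y)) :
    x'*y'/(1 + ε^2*(x'^2 + y'^2)) = x*y/(1 + ε^2*(x^2 + y^2)) ∧
    (x'^2 + y'^2 + z'^2)/(1 + ε^2*(x'^2 + y'^2)) =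
      (x^2 + y^2 + z^2)/(1 + ε^2*(x^2 + y^2)) := by
  have hd : (0:ℝ) < 1 + ε^2*(x^2 + y^2) := by positivity
  have hd' : (0:ℝ) < 1 + ε^2*(x'^2 + y'^2) := by positivity
  constructor
  · rw [div_eq_div_iff hd'.ne' hd.ne']
    linear_combination ((y + y')/2) * h1 + ((x + x')/2) * h2 +
      (ε*(y*x' - x*y')/2) * h3
  · rw [div_eq_div_iff hd'.ne' hd.ne']
    linear_combination (-ε*z*x' + ε*x*z' + x + x') * h1 +
      (ε*z*y' - ε*y*z' + y + y') * h2 + (z + z') * h3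
end

section
/- Let ε, x, y, z, x̃, ỹ, z̃ be real numbers satisfying the Kahan–Hirota–Kimura discretization relations of the flow E₅: x̃ - x = ε(x ỹ + x̃ y), ỹ - y = -2ε x x̃, z̃ - z = ε(2x ỹ + 2x̃ y - y z̃ - ỹ z). Then (x̃² + ỹ²)/(1 + ε²x̃²) = (x² + y²)/(1 + ε²x²); that is, Ĥ₅(ε) = (x² + y²)/(2(1 + ε²x²)) is an integral of motion of the discrete system dE₅. Equivalently, (x̃ - x)(x̃ + x) + (ỹ - y)(ỹ + y) = -ε²(x ỹ - x̃ y)(x ỹ + x̃ y) holds identically under the above relations. -/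
/-- The function `Ĥ₅(ε) = (x² + y²)/(2(1 + ε²x²))` is an integral of motion of
the Kahan–Hirota–Kimura discretization `dE₅`; equivalently, the identity
`(x̃ - x)(x̃ + x) + (ỹ - y)(ỹ + y) = -ε²(x ỹ - x̃ y)(x ỹ + x̃ y)` holds. -/
theorem dE5_H5_integral (ε x y z x' y' z' : ℝ)
    (h1 : x' - x = ε*(x*y' + x'*y))
    (h2 : y' - y = -2*ε*x*x')
    (h3 : z' - z = ε*(2*x*y' + 2*x'*y - y*z' - y'*z)) :
    (x'^2 + y'^2)/(1 + ε^2*x'^2) = (x^2 + y^2)/(1 + ε^2*x^2) ∧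
    (x' - x)*(x' + x) + (y' - y)*(y' + y) = -ε^2*(x*y' - x'*y)*(x*y' + x'*y) := by
  have key : (x' - x)*(x' + x) + (y' - y)*(y' + y)
      = -ε^2*(x*y' - x'*y)*(x*y' + x'*y) := by
    linear_combination (x' + x)*h1 + (y' + y)*h2 - ε*(x*y' - x'*y)*h1
  refine ⟨?_, key⟩
  have d1 : (1 : ℝ) + ε^2*x'^2 > 0 := by positivity
  have d2 : (1 : ℝ) + ε^2*x^2 > 0 := by positivity
  rw [div_eq_div_iff (ne_of_gt d1) (ne_of_gt d2)]
  linear_combination key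
end

section
/- Let ε, x, y, z, x̃, ỹ, z̃ be real numbers satisfying the Kahan–Hirota–Kimura discretization relations of the flow E₅: x̃ - x = ε(x ỹ + x̃ y), ỹ - y = -2ε x x̃, z̃ - z = ε(2x ỹ + 2x̃ y - y z̃ - ỹ z). Then (z̃ x̃ + ỹ²)/(1 + ε²x̃²) = (z x + y²)/(1 + ε²x²); that is, K̂₅(ε) = (z x + y²)/(1 + ε²x²) is an integral of motion of the discrete system dE₅. -/
/-- The function `K̂₅(ε) = (z x + y²)/(1 + ε²x²)` is an integral of motion of
the Kahan–Hirota–Kimura discretization `dE₅`. -/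
theorem dE5_K5_integral (ε x y z x' y' z' : ℝ)
    (h1 : x' - x = ε*(x*y' + x'*y))
    (h2 : y' - y = -2*ε*x*x')
    (h3 : z' - z = ε*(2*x*y' + 2*x'*y - y*z' - y'*z)) :
    (z'*x' + y'^2)/(1 + ε^2*x'^2) = (z*x + y^2)/(1 + ε^2*x^2) := by
  have d1 : (1 : ℝ) + ε^2*x'^2 ≠ 0 := by positivity
  have d2 : (1 : ℝ) + ε^2*x^2 ≠ 0 := by positivity
  rw [div_eq_div_iff d1 d2]
  linear_combination (z'/2 + z/2 + ε*y*x' - ε*x*y') * h1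
    + (y' + y - ε*z*x'/2 + ε*x*z'/2) * h2 + (x'/2 + x/2) * h3
end

section
/- Let ε, x, y, z, x̃, ỹ, z̃ be real numbers satisfying the Kahan–Hirota–Kimura discretization relations of the flow E₅: x̃ - x = ε(x ỹ + x̃ y), ỹ - y = -2ε x x̃, z̃ - z = ε(2x ỹ + 2x̃ y - y z̃ - ỹ z). Then the identity (x̃ z̃ + ỹ²)(x̃² + ỹ²)·(1 + ε y)(1 - ε y + 2ε²x²) = (x z + y²)(x² + y²)·(1 - ε ỹ)(1 + ε ỹ + 2ε²x̃²) holds. Consequently, if both sides' factors are nonzero, the Jacobian determinant of the map (x,y,z) ↦ (x̃,ỹ,z̃), which equals (1 - ε ỹ)(1 + ε ỹ + 2ε²x̃²) / ((1 + ε y)(1 - ε y + 2ε²x²)), also equals (x̃ z̃ + ỹ²)(x̃² + ỹ²) / ((x z + y²)(x² + y²)), so the map preserves the volume form Ω₅ = -2/((x z + y²)(x² + y²)) dx∧dy∧dz. -/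
/-!
The determinant of `A₅(x;ε)` factors as `(1 + εy) * (1 - εy + 2ε²x²)`: the `(3,3)` entry times the
determinant of the upper-left `2 × 2` block. The map multiplies each of the two quadratic forms
`x² + y²` and `xz + y²` by a ratio of such factors, `(1 - εỹ) / (1 - εy + 2ε²x²)` and
`(1 + εỹ + 2ε²x̃²) / (1 + εy)` respectively, so their product is multiplied by
`det A₅(x̃;-ε) / det A₅(x;ε)`, the Jacobian determinant.
-/

namespace KahanE5

variable {R : Type*} [CommRing R] {ε x y z x' y' z' : R}

theorem sq_add_sq_next_mul (h1 : x' - x = ε*(x*y' + x'*y)) (h2 : y' - y = -2*ε*x*x') :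
    (x'^2 + y'^2) * (1 - ε*y + 2*ε^2*x^2) = (x^2 + y^2) * (1 - ε*y') := by
  linear_combination (x' + x - 2*ε*x*y') * h1 + (y' + y - ε*y*y' + ε*x*x') * h2

theorem mul_add_sq_next_mul (h1 : x' - x = ε*(x*y' + x'*y)) (h2 : y' - y = -2*ε*x*x')
    (h3 : z' - z = ε*(2*x*y' + 2*x'*y - y*z' - y'*z)) :
    (x'*z' + y'^2) * (1 + ε*y) = (x*z + y^2) * (1 + ε*y' + 2*ε^2*x'^2) := by
  linear_combination (z + 2*ε*y*x') * h1 + (y' + y + ε*y*y' - ε*z*x') * h2 + x' * h3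

theorem density_next_mul_det (h1 : x' - x = ε*(x*y' + x'*y)) (h2 : y' - y = -2*ε*x*x')
    (h3 : z' - z = ε*(2*x*y' + 2*x'*y - y*z' - y'*z)) :
    (x'*z' + y'^2)*(x'^2 + y'^2)*((1 + ε*y)*(1 - ε*y + 2*ε^2*x^2)) =
      (x*z + y^2)*(x^2 + y^2)*((1 - ε*y')*(1 + ε*y' + 2*ε^2*x'^2)) := by
  linear_combination (x'*z' + y'^2) * (1 + ε*y) * sq_add_sq_next_mul h1 h2 +
    (x^2 + y^2) * (1 - ε*y') * mul_add_sq_next_mul h1 h2 h3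

end KahanE5

/-- Volume preservation for the discretization `dE₅`: the polynomial identity
`(x̃z̃+ỹ²)(x̃²+ỹ²)(1+εy)(1-εy+2ε²x²) = (xz+y²)(x²+y²)(1-εỹ)(1+εỹ+2ε²x̃²)` holds,
and consequently (when all factors are nonzero) the Jacobian determinant
`(1-εỹ)(1+εỹ+2ε²x̃²)/((1+εy)(1-εy+2ε²x²))` of the map equals
`(x̃z̃+ỹ²)(x̃²+ỹ²)/((xz+y²)(x²+y²))`, so the map preserves
`Ω₅ = -2/((xz+y²)(x²+y²)) dx∧dy∧dz`. -/
theorem dE5_volume_preservation (ε x y z x' y' z' : ℝ)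
    (h1 : x' - x = ε*(x*y' + x'*y))
    (h2 : y' - y = -2*ε*x*x')
    (h3 : z' - z = ε*(2*x*y' + 2*x'*y - y*z' - y'*z)) :
    (x'*z' + y'^2)*(x'^2 + y'^2)*((1 + ε*y)*(1 - ε*y + 2*ε^2*x^2)) =
      (x*z + y^2)*(x^2 + y^2)*((1 - ε*y')*(1 + ε*y' + 2*ε^2*x'^2)) ∧
    ((x*z + y^2)*(x^2 + y^2) ≠ 0 → (1 + ε*y)*(1 - ε*y + 2*ε^2*x^2) ≠ 0 →
      (1 - ε*y')*(1 + ε*y' + 2*ε^2*x'^2)/((1 + ε*y)*(1 - ε*y + 2*ε^2*x^2)) =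
        (x'*z' + y'^2)*(x'^2 + y'^2)/((x*z + y^2)*(x^2 + y^2))) := by
  have key := KahanE5.density_next_mul_det h1 h2 h3
  refine ⟨key, fun hdensity hdet => ?_⟩
  rw [div_eq_div_iff hdet hdensity]
  linear_combination -key
end

section
/- Let ε, x, y, z, x̃, ỹ, z̃ be real numbers satisfying the Kahan–Hirota–Kimura discretization relations of the flow E₆: x̃ - x = ε(2(ỹ z + y z̃) - (x̃ y + x ỹ)), ỹ - y = 2ε(x̃ x - z̃ z), z̃ - z = ε((ỹ z + y z̃) - 2(x̃ y + x ỹ)). Then (z̃ x̃ + ỹ²)/(1 - 3ε²x̃ z̃) = (z x + y²)/(1 - 3ε²x z) and (x̃² + ỹ² + z̃²)/(1 - 3ε²x̃ z̃) = (x² + y² + z²)/(1 - 3ε²x z), provided 1 - 3ε²x z ≠ 0 and 1 - 3ε²x̃ z̃ ≠ 0; that is, Ĥ₆(ε) = (z x + y²)/(1 - 3ε²x z) and K̂₆(ε) = (x² + y² + z²)/(2(1 - 3ε²x z)) are integrals of motion of the discrete system dE₆. -/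
/-- The functions `Ĥ₆(ε) = (z x + y²)/(1 - 3ε²x z)` and
`K̂₆(ε) = (x² + y² + z²)/(2(1 - 3ε²x z))` are integrals of motion of the
Kahan–Hirota–Kimura discretization `dE₆`. -/
theorem dE6_integrals (ε x y z x' y' z' : ℝ)
    (h1 : x' - x = ε*(2*(y'*z + y*z') - (x'*y + x*y')))
    (h2 : y' - y = 2*ε*(x'*x - z'*z))
    (h3 : z' - z = ε*((y'*z + y*z') - 2*(x'*y + x*y')))
    (hd : 1 - 3*ε^2*x*z ≠ 0) (hd' : 1 - 3*ε^2*x'*z' ≠ 0) :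
    (z'*x' + y'^2)/(1 - 3*ε^2*x'*z') = (z*x + y^2)/(1 - 3*ε^2*x*z) ∧
    (x'^2 + y'^2 + z'^2)/(1 - 3*ε^2*x'*z') =
      (x^2 + y^2 + z^2)/(1 - 3*ε^2*x*z) := by
  constructor
  · rw [div_eq_div_iff hd' hd]
    linear_combination (z' - ε*y*z' + 2*ε*x*y')*h1 + (y' + y)*h2 +
      (x + 2*ε*y*z' - ε*x*y')*h3
  · rw [div_eq_div_iff hd' hd]
    linear_combination (z'/2 + x' - z/2 + x - ε*y*z' + 2*ε*x*y')*h1 +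
      (y' + y + (3/2)*ε*z*x' - (3/2)*ε*x*z')*h2 +
      (z' - x'/2 + z + x/2 + 2*ε*y*z' - ε*x*y')*h3
end

section
/- Let ε ≠ 0 and τ, β, γ be real numbers, and define for n ∈ ℤ (with n + τ ≠ 0 for all relevant n): xₙ = 1/(2ε(n + τ)), yₙ = β/(2ε(n + τ)), zₙ = 2γε(n + τ) - (β²ε⁻¹ + γε)/(2(n + τ)). Then these sequences satisfy the discrete system dE₁ for every n: xₙ₊₁ - xₙ = -2ε xₙ xₙ₊₁, yₙ₊₁ - yₙ = -ε(xₙ₊₁ yₙ + xₙ yₙ₊₁), zₙ₊₁ - zₙ = 4ε yₙ yₙ₊₁ + ε(xₙ₊₁ zₙ + xₙ zₙ₊₁). Moreover along this solution Ĥ₁ = yₙ/xₙ = β and K̂₁(ε) = (zₙ xₙ + yₙ²)/(1 - ε²xₙ²) = γ. -/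
/-- Explicit solution of the discrete system `dE₁`: the sequences
`xₙ = 1/(2ε(n+τ))`, `yₙ = β/(2ε(n+τ))`,
`zₙ = 2γε(n+τ) - (β²ε⁻¹+γε)/(2(n+τ))` satisfy `dE₁`, with
`Ĥ₁ = yₙ/xₙ = β` and `K̂₁(ε) = (zₙxₙ+yₙ²)/(1-ε²xₙ²) = γ`. -/
theorem dE1_explicit_solution (ε τ β γ : ℝ) (hε : ε ≠ 0)
    (hτ : ∀ n : ℤ, (n : ℝ) + τ ≠ 0)
    (x y z : ℤ → ℝ)
    (hx : ∀ n : ℤ, x n = 1/(2*ε*((n : ℝ) + τ)))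
    (hy : ∀ n : ℤ, y n = β/(2*ε*((n : ℝ) + τ)))
    (hz : ∀ n : ℤ, z n = 2*γ*ε*((n : ℝ) + τ) - (β^2*ε⁻¹ + γ*ε)/(2*((n : ℝ) + τ))) :
    (∀ n : ℤ, x (n+1) - x n = -2*ε*(x n)*(x (n+1))) ∧
    (∀ n : ℤ, y (n+1) - y n = -ε*((x (n+1))*(y n) + (x n)*(y (n+1)))) ∧
    (∀ n : ℤ, z (n+1) - z n =
      4*ε*(y n)*(y (n+1)) + ε*((x (n+1))*(z n) + (x n)*(z (n+1)))) ∧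
    (∀ n : ℤ, y n / x n = β) ∧
    (∀ n : ℤ, 1 - ε^2*(x n)^2 ≠ 0 →
      ((z n)*(x n) + (y n)^2)/(1 - ε^2*(x n)^2) = γ) := by
  have h1 : ∀ n : ℤ, ((n+1 : ℤ) : ℝ) + τ = ((n:ℝ) + τ) + 1 := by
    intro n; push_cast; ring
  refine ⟨?_, ?_, ?_, ?_, ?_⟩
  · intro n
    rw [hx, hx, h1]
    have h := hτ n; have h' := hτ (n+1); rw [h1] at h'
    field_simp
    ring
  · intro n
    rw [hx, hx, hy, hy, h1]
    have h := hτ n; have h' := hτ (n+1); rw [h1] at h'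
    field_simp
    ring
  · intro n
    rw [hx, hx, hy, hy, hz, hz, h1]
    have h := hτ n; have h' := hτ (n+1); rw [h1] at h'
    field_simp
    ring
  · intro n
    rw [hx, hy]
    have h := hτ n
    field_simp
  · intro n hne
    rw [hx, hy, hz] at *
    have h := hτ n
    rw [div_eq_iff hne]
    field_simp
    ring
end

section
/- Let ε ≠ 0 and τ, β, γ be real numbers, and define for n ∈ ℤ (with n + τ ≠ 0 for all relevant n): xₙ = 1/(2ε(n + τ)), yₙ = 2βε[(n + τ) - 1/(4(n + τ))], zₙ = ε[2(n + τ) - 1/(2(n + τ))]·[γ - β²ε²(4(n + τ)² - 1)]. Then these sequences satisfy the discrete system dE₂ for every n: xₙ₊₁ - xₙ = -2ε xₙ xₙ₊₁, yₙ₊₁ - yₙ = ε(xₙ₊₁ yₙ + xₙ yₙ₊₁), zₙ₊₁ - zₙ = -4ε yₙ yₙ₊₁ + ε(xₙ₊₁ zₙ + xₙ zₙ₊₁). Moreover along this solution Ĥ₂(ε) = xₙ yₙ/(1 - ε²xₙ²) = β and K̂₂(ε) = (zₙ xₙ + yₙ²)/(1 - ε²xₙ²) = γ. -/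
lemma dE2_aux1 (ε β : ℝ) (hε : ε ≠ 0) (s : ℝ) (hs : s ≠ 0) (hs1 : s + 1 ≠ 0) :
    1/(2*ε*(s+1)) - 1/(2*ε*s) = -2*ε*(1/(2*ε*s))*(1/(2*ε*(s+1))) := by
  field_simp
  ring

lemma dE2_aux2 (ε β : ℝ) (hε : ε ≠ 0) (s : ℝ) (hs : s ≠ 0) (hs1 : s + 1 ≠ 0) :
    2*β*ε*((s+1) - 1/(4*(s+1))) - 2*β*ε*(s - 1/(4*s)) =
      ε*((1/(2*ε*(s+1)))*(2*β*ε*(s - 1/(4*s))) +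
         (1/(2*ε*s))*(2*β*ε*((s+1) - 1/(4*(s+1))))) := by
  field_simp
  ring

lemma dE2_aux3 (ε β γ : ℝ) (hε : ε ≠ 0) (s : ℝ) (hs : s ≠ 0) (hs1 : s + 1 ≠ 0) :
    ε*(2*(s+1) - 1/(2*(s+1)))*(γ - β^2*ε^2*(4*(s+1)^2 - 1))
      - ε*(2*s - 1/(2*s))*(γ - β^2*ε^2*(4*s^2 - 1)) =
    -4*ε*(2*β*ε*(s - 1/(4*s)))*(2*β*ε*((s+1) - 1/(4*(s+1))))
      + ε*((1/(2*ε*(s+1)))*(ε*(2*s - 1/(2*s))*(γ - β^2*ε^2*(4*s^2 - 1)))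
         + (1/(2*ε*s))*(ε*(2*(s+1) - 1/(2*(s+1)))*(γ - β^2*ε^2*(4*(s+1)^2 - 1)))) := by
  field_simp
  ring

/-- Explicit solution of the discrete system `dE₂`: the sequences
`xₙ = 1/(2ε(n+τ))`, `yₙ = 2βε[(n+τ) - 1/(4(n+τ))]`,
`zₙ = ε[2(n+τ) - 1/(2(n+τ))]·[γ - β²ε²(4(n+τ)²-1)]` satisfy `dE₂`, with
`Ĥ₂(ε) = xₙyₙ/(1-ε²xₙ²) = β` and `K̂₂(ε) = (zₙxₙ+yₙ²)/(1-ε²xₙ²) = γ`. -/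
theorem dE2_explicit_solution (ε τ β γ : ℝ) (hε : ε ≠ 0)
    (hτ : ∀ n : ℤ, (n : ℝ) + τ ≠ 0)
    (x y z : ℤ → ℝ)
    (hx : ∀ n : ℤ, x n = 1/(2*ε*((n : ℝ) + τ)))
    (hy : ∀ n : ℤ, y n = 2*β*ε*(((n : ℝ) + τ) - 1/(4*((n : ℝ) + τ))))
    (hz : ∀ n : ℤ, z n = ε*(2*((n : ℝ) + τ) - 1/(2*((n : ℝ) + τ))) *
      (γ - β^2*ε^2*(4*((n : ℝ) + τ)^2 - 1))) :
    (∀ n : ℤ, x (n+1) - x n = -2*ε*(x n)*(x (n+1))) ∧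
    (∀ n : ℤ, y (n+1) - y n = ε*((x (n+1))*(y n) + (x n)*(y (n+1)))) ∧
    (∀ n : ℤ, z (n+1) - z n =
      -4*ε*(y n)*(y (n+1)) + ε*((x (n+1))*(z n) + (x n)*(z (n+1)))) ∧
    (∀ n : ℤ, 1 - ε^2*(x n)^2 ≠ 0 →
      (x n)*(y n)/(1 - ε^2*(x n)^2) = β) ∧
    (∀ n : ℤ, 1 - ε^2*(x n)^2 ≠ 0 →
      ((z n)*(x n) + (y n)^2)/(1 - ε^2*(x n)^2) = γ) := by
  have key : ∀ n : ℤ, (((n+1 : ℤ) : ℝ) + τ) = ((n : ℝ) + τ) + 1 := by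
    intro n; push_cast; ring
  have hs : ∀ n : ℤ, ((n : ℝ) + τ) ≠ 0 := hτ
  have hs1 : ∀ n : ℤ, ((n : ℝ) + τ) + 1 ≠ 0 := by
    intro n; rw [← key n]; exact hτ (n+1)
  refine ⟨?_, ?_, ?_, ?_, ?_⟩
  · intro n
    rw [hx n, hx (n+1), key n]
    exact dE2_aux1 ε β hε _ (hs n) (hs1 n)
  · intro n
    rw [hx n, hx (n+1), hy n, hy (n+1), key n]
    exact dE2_aux2 ε β hε _ (hs n) (hs1 n)
  · intro n
    rw [hx n, hx (n+1), hy n, hy (n+1), hz n, hz (n+1), key n]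
    exact dE2_aux3 ε β γ hε _ (hs n) (hs1 n)
  · intro n hd
    rw [hx n] at hd ⊢
    rw [hy n, div_eq_iff hd]
    have := hs n
    field_simp
    ring
  · intro n hd
    rw [hx n] at hd ⊢
    rw [hy n, hz n, div_eq_iff hd]
    have := hs n
    field_simp
    ring
end

section
/- Let ε ≠ 0 and δ, κ, μ be real numbers, and define for n ∈ ℤ: xₙ = sinh δ/(ε cosh(2δn + κ)), yₙ = -ε⁻¹ tanh δ · tanh(2δn + κ), zₙ = μ cosh(2δn + κ) + (ε⁻¹ + μ sinh δ)·sinh δ/cosh(2δn + κ). Then these sequences satisfy the discrete system dE₅ for every n: xₙ₊₁ - xₙ = ε(xₙ yₙ₊₁ + xₙ₊₁ yₙ), yₙ₊₁ - yₙ = -2ε xₙ xₙ₊₁, zₙ₊₁ - zₙ = ε(2xₙ yₙ₊₁ + 2xₙ₊₁ yₙ - yₙ zₙ₊₁ - yₙ₊₁ zₙ). Moreover along this solution Ĥ₅(ε) = (xₙ² + yₙ²)/(2(1 + ε²xₙ²)) = tanh²δ/(2ε²) and K̂₅(ε) = (zₙ xₙ + yₙ²)/(1 + ε²xₙ²) =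 ε⁻¹μ sinh δ + ε⁻² tanh²δ. -/
set_option maxHeartbeats 2000000 in

open Real in
lemma dE5_key (ε δ μ : ℝ) (hε : ε ≠ 0) (t : ℝ) :
    (sinh δ / (ε * cosh (t+2*δ)) - sinh δ / (ε * cosh t) =
      ε*((sinh δ / (ε * cosh t))*(-ε⁻¹ * tanh δ * tanh (t+2*δ))
        + (sinh δ / (ε * cosh (t+2*δ)))*(-ε⁻¹ * tanh δ * tanh t))) ∧
    ((-ε⁻¹ * tanh δ * tanh (t+2*δ)) - (-ε⁻¹ * tanh δ * tanh t) =
      -2*ε*(sinh δ / (ε * cosh t))*(sinh δ / (ε * cosh (t+2*δ)))) ∧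
    ((μ * cosh (t+2*δ) + (ε⁻¹ + μ * sinh δ) * sinh δ / cosh (t+2*δ))
      - (μ * cosh t + (ε⁻¹ + μ * sinh δ) * sinh δ / cosh t) =
      ε*(2*(sinh δ / (ε * cosh t))*(-ε⁻¹ * tanh δ * tanh (t+2*δ))
        + 2*(sinh δ / (ε * cosh (t+2*δ)))*(-ε⁻¹ * tanh δ * tanh t)
        - (-ε⁻¹ * tanh δ * tanh t)*(μ * cosh (t+2*δ) + (ε⁻¹ + μ * sinh δ) * sinh δ / cosh (t+2*δ))
        - (-ε⁻¹ * tanh δ * tanh (t+2*δ))*(μ * cosh t + (ε⁻¹ + μ * sinh δ) * sinh δ / cosh t))) ∧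
    (((sinh δ / (ε * cosh t))^2 + (-ε⁻¹ * tanh δ * tanh t)^2)
      /(2*(1 + ε^2*(sinh δ / (ε * cosh t))^2)) = (tanh δ)^2/(2*ε^2)) ∧
    (((μ * cosh t + (ε⁻¹ + μ * sinh δ) * sinh δ / cosh t)*(sinh δ / (ε * cosh t))
        + (-ε⁻¹ * tanh δ * tanh t)^2)/(1 + ε^2*(sinh δ / (ε * cosh t))^2) =
      ε⁻¹*μ*sinh δ + ε⁻¹^2*(tanh δ)^2) := by
  have h2 : t + 2*δ = (t + δ) + δ := by ring
  have he : Real.exp t > 0 := Real.exp_pos t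
  have hE : Real.exp δ > 0 := Real.exp_pos δ
  simp only [Real.tanh_eq_sinh_div_cosh, Real.cosh_eq, Real.sinh_eq, h2, Real.exp_add,
    Real.exp_neg, mul_inv]
  set e := Real.exp t
  set E := Real.exp δ
  have h1 : e + e⁻¹ ≠ 0 := by positivity
  have h3 : e*E*E + e⁻¹*E⁻¹*E⁻¹ ≠ 0 := by positivity
  have h4 : E + E⁻¹ ≠ 0 := by positivity
  have hden : ∀ a : ℝ, a > 0 → 1 + ε^2 * ((E - E⁻¹)/2 / (ε * ((a + a⁻¹)/2)))^2 ≠ 0 := by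
    intro a ha
    have : ((E - E⁻¹)/2 / (ε * ((a + a⁻¹)/2)))^2 ≥ 0 := sq_nonneg _
    positivity
  refine ⟨by field_simp; ring, by field_simp; ring, by field_simp; ring, ?_, ?_⟩
  · rw [div_eq_div_iff (by have := hden e he; intro h; apply this; linarith [mul_ne_zero (two_ne_zero (α := ℝ)) (hden e he)]) (by positivity)]
    · field_simp
      ring
  · rw [div_eq_iff (hden e he)]
    field_simp
    ring

/-- Explicit solution of the discrete system `dE₅` in hyperbolic functions:
`xₙ = sinh δ/(ε cosh(2δn+κ))`, `yₙ = -ε⁻¹ tanh δ tanh(2δn+κ)`,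
`zₙ = μ cosh(2δn+κ) + (ε⁻¹+μ sinh δ) sinh δ/cosh(2δn+κ)` satisfy `dE₅`, with
`Ĥ₅(ε) = tanh²δ/(2ε²)` and `K̂₅(ε) = ε⁻¹μ sinh δ + ε⁻² tanh²δ`. -/
theorem dE5_explicit_solution (ε δ κ μ : ℝ) (hε : ε ≠ 0)
    (x y z : ℤ → ℝ)
    (hx : ∀ n : ℤ, x n = Real.sinh δ / (ε * Real.cosh (2*δ*(n : ℝ) + κ)))
    (hy : ∀ n : ℤ, y n = -ε⁻¹ * Real.tanh δ * Real.tanh (2*δ*(n : ℝ) + κ))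
    (hz : ∀ n : ℤ, z n = μ * Real.cosh (2*δ*(n : ℝ) + κ) +
      (ε⁻¹ + μ * Real.sinh δ) * Real.sinh δ / Real.cosh (2*δ*(n : ℝ) + κ)) :
    (∀ n : ℤ, x (n+1) - x n = ε*((x n)*(y (n+1)) + (x (n+1))*(y n))) ∧
    (∀ n : ℤ, y (n+1) - y n = -2*ε*(x n)*(x (n+1))) ∧
    (∀ n : ℤ, z (n+1) - z n = ε*(2*(x n)*(y (n+1)) + 2*(x (n+1))*(y n)
      - (y n)*(z (n+1)) - (y (n+1))*(z n))) ∧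
    (∀ n : ℤ, ((x n)^2 + (y n)^2)/(2*(1 + ε^2*(x n)^2)) =
      (Real.tanh δ)^2/(2*ε^2)) ∧
    (∀ n : ℤ, ((z n)*(x n) + (y n)^2)/(1 + ε^2*(x n)^2) =
      ε⁻¹*μ*Real.sinh δ + ε⁻¹^2*(Real.tanh δ)^2) := by
  have harg : ∀ n : ℤ, 2*δ*((n+1 : ℤ) : ℝ) + κ = (2*δ*(n : ℝ) + κ) + 2*δ := by
    intro n; push_cast; ring
  refine ⟨fun n => ?_, fun n => ?_, fun n => ?_, fun n => ?_, fun n => ?_⟩ <;>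
    simp only [hx, hy, hz, harg]
  · exact (dE5_key ε δ μ hε (2*δ*(n : ℝ) + κ)).1
  · exact (dE5_key ε δ μ hε (2*δ*(n : ℝ) + κ)).2.1
  · exact (dE5_key ε δ μ hε (2*δ*(n : ℝ) + κ)).2.2.1
  · exact (dE5_key ε δ μ hε (2*δ*(n : ℝ) + κ)).2.2.2.1
  · exact (dE5_key ε δ μ hε (2*δ*(n : ℝ) + κ)).2.2.2.2
end

section
/- Let H be a real constant and let w₀, w₁, w₂ be real numbers satisfying w₂·(4w₀w₁ - (1 + H²)) = 4w₁³ + (1 + H²)(2w₁ + w₀), with 4w₀w₁ - (1 + H²) ≠ 0 and 4w₁w₂ - (1 + H²) ≠ 0. Define L(a,b) = (2(a² + b²) + 1 + H²)/(4ab - (1 + H²)). Then: (i) L(w₁, w₂) = L(w₀, w₁), i.e. L is a conserved quantity of the second-order recurrence wₙ₊₂ = (4wₙ₊₁³ + (1 + H²)(2wₙ₊₁ + wₙ))/(4wₙwₙ₊₁ - (1 + H²)); (ii) the linear relation w₂ - 2L(w₀, w₁)·w₁ + w₀ = 0 holds, so the recurrence is linearizable. -/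
/-!
Writing `c = 1 + H²` and `L = L(w₀, w₁)`, the recurrence is equivalent to the linear relation
`w₂ + w₀ = 2 L w₁`, since `(w₂ + w₀)(4w₀w₁ - c) = 2w₁(2(w₀² + w₁²) + c)`. The pair `(w₀, w₁)` lies on the
conic `2(a² + b²) + c = L (4ab - c)`, and the map `(a, b) ↦ (b, 2Lb - a)` preserves this conic, so
`(w₁, w₂)` lies on it as well. As `2(a² + b²) + c > 0`, the denominator `4w₁w₂ - c` cannot vanish there,
and therefore `L(w₁, w₂) = L`.
-/

/-- The conserved quantity `L(a, b)`, with `c` standing for `1 + H²`. -/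
noncomputable def dE3Invariant {K : Type*} [Field K] (c a b : K) : K :=
  (2 * (a ^ 2 + b ^ 2) + c) / (4 * a * b - c)

section Field

variable {K : Type*} [Field K] {c L a b w0 w1 w2 : K}

theorem dE3Invariant_mul_denom (hD : 4 * a * b - c ≠ 0) :
    dE3Invariant c a b * (4 * a * b - c) = 2 * (a ^ 2 + b ^ 2) + c :=
  div_mul_cancel₀ _ hD

theorem dE3Invariant_eq_of_mem_conic (hD : 4 * a * b - c ≠ 0)
    (h : 2 * (a ^ 2 + b ^ 2) + c = L * (4 * a * b - c)) : dE3Invariant c a b = L :=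
  (div_eq_iff hD).2 h

theorem add_eq_two_mul_dE3Invariant_mul
    (hrec : w2 * (4 * w0 * w1 - c) = 4 * w1 ^ 3 + c * (2 * w1 + w0))
    (h0 : 4 * w0 * w1 - c ≠ 0) :
    w2 + w0 = 2 * dE3Invariant c w0 w1 * w1 := by
  apply mul_right_cancel₀ h0
  linear_combination hrec - 2 * w1 * dE3Invariant_mul_denom h0

theorem mem_conic_reflect (h : 2 * (a ^ 2 + b ^ 2) + c = L * (4 * a * b - c)) :
    2 * (b ^ 2 + (2 * L * b - a) ^ 2) + c = L * (4 * b * (2 * L * b - a) - c) := by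
  linear_combination h

end Field

section Ordered

variable {K : Type*} [Field K] [LinearOrder K] [IsStrictOrderedRing K] {c L a b w0 w1 w2 : K}

theorem denom_ne_zero_of_mem_conic (hc : 0 < c)
    (h : 2 * (a ^ 2 + b ^ 2) + c = L * (4 * a * b - c)) : 4 * a * b - c ≠ 0 := by
  intro hD
  rw [hD, mul_zero] at h
  have : 0 < 2 * (a ^ 2 + b ^ 2) + c := by positivity
  exact this.ne' h

theorem dE3Invariant_step (hc : 0 < c)
    (hrec : w2 * (4 * w0 * w1 - c) = 4 * w1 ^ 3 + c * (2 * w1 + w0))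
    (h0 : 4 * w0 * w1 - c ≠ 0) :
    dE3Invariant c w1 w2 = dE3Invariant c w0 w1 := by
  have hw2 : w2 = 2 * dE3Invariant c w0 w1 * w1 - w0 :=
    eq_sub_of_add_eq (add_eq_two_mul_dE3Invariant_mul hrec h0)
  have hconic := mem_conic_reflect (dE3Invariant_mul_denom h0).symm
  rw [← hw2] at hconic
  exact dE3Invariant_eq_of_mem_conic (denom_ne_zero_of_mem_conic hc hconic) hconic

end Ordered

theorem dE3_recurrence_conserved_and_linearizable_general (H w0 w1 w2 : ℝ)
    (hrec : w2*(4*w0*w1 - (1 + H^2)) = 4*w1^3 + (1 + H^2)*(2*w1 + w0))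
    (h0 : 4*w0*w1 - (1 + H^2) ≠ 0) :
    (2*(w1^2 + w2^2) + 1 + H^2)/(4*w1*w2 - (1 + H^2)) =
      (2*(w0^2 + w1^2) + 1 + H^2)/(4*w0*w1 - (1 + H^2)) ∧
    w2 - 2*((2*(w0^2 + w1^2) + 1 + H^2)/(4*w0*w1 - (1 + H^2)))*w1 + w0 = 0 := by
  have hc : (0 : ℝ) < 1 + H ^ 2 := by positivity
  have hstep := dE3Invariant_step hc hrec h0
  have hlin := add_eq_two_mul_dE3Invariant_mul hrec h0
  simp only [dE3Invariant, ← add_assoc] at hstep hlin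
  exact ⟨hstep, by linear_combination hlin⟩

/-- The second-order recurrence `wₙ₊₂ = (4wₙ₊₁³ + (1+H²)(2wₙ₊₁+wₙ))/(4wₙwₙ₊₁-(1+H²))`
arising from `dE₃` has the conserved quantity
`L(a,b) = (2(a²+b²)+1+H²)/(4ab-(1+H²))`, and satisfies the linear relation
`w₂ - 2L(w₀,w₁)w₁ + w₀ = 0`, so it is linearizable. -/
theorem dE3_recurrence_conserved_and_linearizable (H w0 w1 w2 : ℝ)
    (hrec : w2*(4*w0*w1 - (1 + H^2)) = 4*w1^3 + (1 + H^2)*(2*w1 + w0))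
    (h0 : 4*w0*w1 - (1 + H^2) ≠ 0)
    (h1 : 4*w1*w2 - (1 + H^2) ≠ 0) :
    (2*(w1^2 + w2^2) + 1 + H^2)/(4*w1*w2 - (1 + H^2)) =
      (2*(w0^2 + w1^2) + 1 + H^2)/(4*w0*w1 - (1 + H^2)) ∧
    w2 - 2*((2*(w0^2 + w1^2) + 1 + H^2)/(4*w0*w1 - (1 + H^2)))*w1 + w0 = 0 :=
  dE3_recurrence_conserved_and_linearizable_general H w0 w1 w2 hrec h0
end

section
/- Let x, y, x̃, ỹ be nonzero real numbers satisfying Kahan's discretization of the Lotka–Volterra system with time step ε = 1: x̃ - x = x̃ + x - x̃ y - x ỹ and ỹ - y = -ỹ - y + x̃ y + x ỹ. Then: (i) ỹ = x and x̃ y = x(2 - x), so the x-coordinate satisfies the antisymmetric QRT recurrence xₙ₊₁xₙ₋₁ = xₙ(2 - xₙ); (ii) the function Ĥ(x,y) = x²/y² + y²/x² + 4(1/x - 1/y)²(1 - x - y) satisfies Ĥ(x̃, ỹ) = Ĥ(x, y), i.e. Ĥ is an integral of motion of the map. -/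
/-!
Adding the two Kahan relations cancels the bilinear terms and leaves `2ỹ = 2x`; the first
relation then becomes the QRT recurrence `x̃ y = x (2 - x)`. Along this recurrence the map is
`(x, y) ↦ (x (2 - x) / y, x)`, and the invariance of `Ĥ` is a rational-function identity.
-/

section KahanLotkaVolterra

variable {K : Type*} [Field K]

/-- The integral of motion `Ĥ` of Kahan's Lotka–Volterra map with step `1`. -/
def kahanLVIntegral (x y : K) : K :=
  x^2/y^2 + y^2/x^2 + 4*(1/x - 1/y)^2*(1 - x - y)

theorem kahanLV_step_eq [NeZero (2 : K)] {x y x' y' : K}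
    (h1 : x' - x = x' + x - x'*y - x*y')
    (h2 : y' - y = -y' - y + x'*y + x*y') :
    y' = x ∧ x'*y = x*(2 - x) := by
  have hy' : y' = x := by
    refine mul_left_cancel₀ (two_ne_zero : (2 : K) ≠ 0) ?_
    linear_combination h1 + h2
  exact ⟨hy', by linear_combination h1 - x*hy'⟩

theorem kahanLVIntegral_qrt_step {x y x' : K} (hx : x ≠ 0) (hy : y ≠ 0) (hx' : x' ≠ 0)
    (hqrt : x'*y = x*(2 - x)) :
    kahanLVIntegral x' x = kahanLVIntegral x y := by
  have h2x : 2 - x ≠ 0 := right_ne_zero_of_mul (hqrt ▸ mul_ne_zero hx' hy)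
  have hx'_eq : x' = x*(2 - x)/y := by rw [← hqrt, mul_div_cancel_right₀ _ hy]
  subst hx'_eq
  unfold kahanLVIntegral
  field_simp
  ring

end KahanLotkaVolterra

theorem kahan_LV_eps_one_general (x y x' y' : ℝ)
    (hx : x ≠ 0) (hy : y ≠ 0) (hx' : x' ≠ 0)
    (h1 : x' - x = x' + x - x'*y - x*y')
    (h2 : y' - y = -y' - y + x'*y + x*y') :
    y' = x ∧ x'*y = x*(2 - x) ∧
    x'^2/y'^2 + y'^2/x'^2 + 4*(1/x' - 1/y')^2*(1 - x' - y') =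
      x^2/y^2 + y^2/x^2 + 4*(1/x - 1/y)^2*(1 - x - y) := by
  obtain ⟨hy', hqrt⟩ := kahanLV_step_eq h1 h2
  subst hy'
  exact ⟨rfl, hqrt, kahanLVIntegral_qrt_step hx hy hx' hqrt⟩

/-- Kahan's discrete Lotka–Volterra system with step `ε = 1`: from the
discretization relations one gets `ỹ = x` and `x̃ y = x(2-x)` (the antisymmetric
QRT recurrence), and `Ĥ(x,y) = x²/y² + y²/x² + 4(1/x-1/y)²(1-x-y)` is an
integral of motion. -/
theorem kahan_LV_eps_one (x y x' y' : ℝ)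
    (hx : x ≠ 0) (hy : y ≠ 0) (hx' : x' ≠ 0) (hy' : y' ≠ 0)
    (h1 : x' - x = x' + x - x'*y - x*y')
    (h2 : y' - y = -y' - y + x'*y + x*y') :
    y' = x ∧ x'*y = x*(2 - x) ∧
    x'^2/y'^2 + y'^2/x'^2 + 4*(1/x' - 1/y')^2*(1 - x' - y') =
      x^2/y^2 + y^2/x^2 + 4*(1/x - 1/y)^2*(1 - x - y) :=
  kahan_LV_eps_one_general x y x' y' hx hy hx' h1 h2
end

section
/- Let ε ≠ 0 and ξ be real numbers, and let x, y, x̃, ỹ be real numbers satisfying the first two equations of the discrete system dE₇: x̃ - x = -2ε x x̃ and ỹ - y = -ε ξ(ỹ x + y x̃). Assume x ≠ 0, x̃ ≠ 0, and that both ξ/2 + 1/(2εx) > 0 and 1 - ξ/2 + 1/(2εx) > 0 (so all arguments of the Gamma function below are positive, noting 1/(2εx̃) = 1/(2εx) + 1). Then the transcendental function Ĥ₇(x,y) = (y/x)·Γ(ξ/2 + 1/(2εx))/Γ(1 - ξ/2 + 1/(2εx)), where Γ is the real Gamma function, satisfies Ĥ₇(x̃, ỹ) = Ĥ₇(x, y);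 that is, Ĥ₇ is an integral of motion of dE₇. -/
/-!
Writing `u = 1/(2εx)`, the first equation of `dE₇` says exactly that `u` increases by one at each
step, so both Gamma factors of `Ĥ₇` advance by `Γ(s + 1) = s Γ(s)`. The resulting rational factor
is cancelled by the change of `y/x`, which is what the second equation says.
-/

theorem one_div_two_mul_mul_eq_add_one {K : Type*} [Field K] [CharZero K] {ε x x' : K} (hε : ε ≠ 0)
    (hx : x ≠ 0) (hx' : x' ≠ 0) (h1 : x' - x = -2*ε*x*x') :
    1/(2*ε*x') = 1/(2*ε*x) + 1 := by
  field_simp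
  linear_combination -h1

theorem Real.Gamma_add_one_div_Gamma_add_one {a b : ℝ} (ha : a ≠ 0) (hb : b ≠ 0) :
    Real.Gamma (a + 1) / Real.Gamma (b + 1) = a / b * (Real.Gamma a / Real.Gamma b) := by
  rw [Real.Gamma_add_one ha, Real.Gamma_add_one hb, mul_div_mul_comm]

theorem dE7_div_mul_eq_div_mul {K : Type*} [Field K] [CharZero K] {ε ξ x y x' y' : K}
    (hε : ε ≠ 0) (hx : x ≠ 0) (hx' : x' ≠ 0) (h1 : x' - x = -2*ε*x*x')
    (h2 : y' - y = -ε*ξ*(y'*x + y*x')) :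
    y' / x' * (ξ/2 + 1/(2*ε*x)) = y / x * (1 - ξ/2 + 1/(2*ε*x)) := by
  field_simp
  linear_combination x * h2 - y * h1

/-- The transcendental function
`Ĥ₇(x,y) = (y/x)·Γ(ξ/2 + 1/(2εx))/Γ(1 - ξ/2 + 1/(2εx))` is an integral of
motion of the first two equations of the discrete system `dE₇`. -/
theorem dE7_H7_integral (ε ξ x y x' y' : ℝ) (hε : ε ≠ 0)
    (hx : x ≠ 0) (hx' : x' ≠ 0)
    (h1 : x' - x = -2*ε*x*x')
    (h2 : y' - y = -ε*ξ*(y'*x + y*x'))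
    (hp1 : ξ/2 + 1/(2*ε*x) > 0)
    (hp2 : 1 - ξ/2 + 1/(2*ε*x) > 0) :
    (y'/x') * Real.Gamma (ξ/2 + 1/(2*ε*x')) / Real.Gamma (1 - ξ/2 + 1/(2*ε*x')) =
      (y/x) * Real.Gamma (ξ/2 + 1/(2*ε*x)) / Real.Gamma (1 - ξ/2 + 1/(2*ε*x)) := by
  set a := ξ/2 + 1/(2*ε*x)
  set b := 1 - ξ/2 + 1/(2*ε*x)
  have hy : y' / x' * a = y / x * b := dE7_div_mul_eq_div_mul hε hx hx' h1 h2
  rw [one_div_two_mul_mul_eq_add_one hε hx hx' h1, ← add_assoc, ← add_assoc, mul_div_assoc,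
    Real.Gamma_add_one_div_Gamma_add_one hp1.ne' hp2.ne', mul_div_assoc]
  calc y' / x' * (a / b * (Real.Gamma a / Real.Gamma b))
      = y' / x' * a / b * (Real.Gamma a / Real.Gamma b) := by ring
    _ = y / x * (Real.Gamma a / Real.Gamma b) := by rw [hy, mul_div_cancel_right₀ _ hp2.ne']
end

section
/- Let ε ≠ 0, and let τ, β be real numbers with n + τ ≠ 0 and n + τ + 1/2 ≠ 0 for all n ∈ ℕ. Define xₙ = 1/(2ε(n + τ)) and yₙ = (τβ - Uₙ)/(2ε(n + τ)), where Uₙ = Σ_{j=0}^{n-1} 1/(j + τ + 1/2). Then these sequences satisfy the first two equations of the discrete system dE₈ for every n ∈ ℕ: xₙ₊₁ - xₙ = -2ε xₙ xₙ₊₁ and yₙ₊₁ - yₙ = -ε(yₙ₊₁ xₙ + yₙ xₙ₊₁) - 2ε xₙ xₙ₊₁. -/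
lemma dE8_aux (ε a s : ℝ) (hε : ε ≠ 0) (ha : a ≠ 0) (hb : a + 1 ≠ 0)
    (hc : a + 1/2 ≠ 0) :
    (s - 1/(a+1/2))/(2*ε*(a+1)) - s/(2*ε*a) =
      -ε*((s - 1/(a+1/2))/(2*ε*(a+1)) * (1/(2*ε*a)) +
          s/(2*ε*a) * (1/(2*ε*(a+1)))) - 2*ε*(1/(2*ε*a))*(1/(2*ε*(a+1))) := by
  have hc2 : 2*a + 1 ≠ 0 := by
    intro h; apply hc; linarith
  have h1 : 1/(a+1/2) = 2/(2*a+1) := by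
    rw [div_eq_div_iff hc hc2]; ring
  rw [h1]
  field_simp
  ring

lemma dE8_aux1 (ε a : ℝ) (hε : ε ≠ 0) (ha : a ≠ 0) (hb : a + 1 ≠ 0) :
    1/(2*ε*(a+1)) - 1/(2*ε*a) = -2*ε*(1/(2*ε*a))*(1/(2*ε*(a+1))) := by
  field_simp
  ring

/-- Explicit solution of the first two equations of the discrete system `dE₈`:
`xₙ = 1/(2ε(n+τ))` and `yₙ = (τβ - Uₙ)/(2ε(n+τ))` with
`Uₙ = Σ_{j=0}^{n-1} 1/(j+τ+1/2)` satisfy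
`xₙ₊₁ - xₙ = -2ε xₙ xₙ₊₁` and `yₙ₊₁ - yₙ = -ε(yₙ₊₁xₙ + yₙxₙ₊₁) - 2ε xₙ xₙ₊₁`. -/
theorem dE8_explicit_solution_xy (ε τ β : ℝ) (hε : ε ≠ 0)
    (hτ : ∀ n : ℕ, (n : ℝ) + τ ≠ 0)
    (hτ' : ∀ n : ℕ, (n : ℝ) + τ + 1/2 ≠ 0)
    (x y U : ℕ → ℝ)
    (hU : ∀ n : ℕ, U n = ∑ j ∈ Finset.range n, 1/((j : ℝ) + τ + 1/2))
    (hx : ∀ n : ℕ, x n = 1/(2*ε*((n : ℝ) + τ)))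
    (hy : ∀ n : ℕ, y n = (τ*β - U n)/(2*ε*((n : ℝ) + τ))) :
    (∀ n : ℕ, x (n+1) - x n = -2*ε*(x n)*(x (n+1))) ∧
    (∀ n : ℕ, y (n+1) - y n =
      -ε*((y (n+1))*(x n) + (y n)*(x (n+1))) - 2*ε*(x n)*(x (n+1))) := by
  have hUrec : ∀ n : ℕ, U (n+1) = U n + 1/((n : ℝ) + τ + 1/2) := by
    intro n
    rw [hU, hU, Finset.sum_range_succ]
  have hcast : ∀ n : ℕ, ((n+1 : ℕ) : ℝ) + τ = ((n : ℝ) + τ) + 1 := by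
    intro n; push_cast; ring
  constructor
  · intro n
    rw [hx, hx, hcast]
    exact dE8_aux1 ε _ hε (hτ n) (hcast n ▸ hτ (n+1))
  · intro n
    rw [hy, hy, hx, hx, hUrec, hcast]
    have : τ*β - (U n + 1/((n:ℝ) + τ + 1/2)) = (τ*β - U n) - 1/(((n:ℝ)+τ) + 1/2) := by
      ring_nf
    rw [this]
    exact dE8_aux ε _ _ hε (hτ n) (hcast n ▸ hτ (n+1)) (hτ' n)
end

section
/- Let α, β, γ, ξ be real numbers and consider the functions x(t) = 1/(t + α), y(t) = β(t + α)^(−ξ), z(t) = (t + α)·(γ − β²(t + α)^(−2ξ)), defined for t with t + α > 0. Then (x, y, z) is a solution of the flow E₇: for all such t, x′(t) = −x(t)², y′(t) = −ξ x(t) y(t), and z′(t) = 2ξ y(t)² + x(t) z(t). Moreover along this solution H₇ = y x^(−ξ) = β and K₇ = z x + y² = γ. -/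
open Real

lemma hasDerivAt_one_div_add_const {a t : ℝ} (h : t + a ≠ 0) :
    HasDerivAt (fun s : ℝ => 1 / (s + a)) (-(1 / (t + a)) ^ 2) t := by
  simpa [one_div, div_eq_mul_inv, inv_pow] using ((hasDerivAt_id t).add_const a).fun_inv h

lemma hasDerivAt_const_mul_add_rpow (c p : ℝ) {a t : ℝ} (h : 0 < t + a) :
    HasDerivAt (fun s : ℝ => c * (s + a) ^ p) (p * (1 / (t + a)) * (c * (t + a) ^ p)) t := by
  refine ((((hasDerivAt_id t).add_const a).rpow_const (Or.inl h.ne')).const_mul c).congr_deriv ?_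
  rw [id, rpow_sub h, rpow_one]
  ring

lemma mul_rpow_neg_sq (β ξ : ℝ) {u : ℝ} (hu : 0 ≤ u) :
    (β * u ^ (-ξ)) ^ 2 = β ^ 2 * u ^ (-(2 * ξ)) := by
  rw [mul_pow, ← rpow_mul_natCast hu]
  ring_nf

lemma rpow_mul_one_div_rpow (p : ℝ) {u : ℝ} (hu : 0 < u) : u ^ p * (1 / u) ^ p = 1 := by
  rw [← mul_rpow hu.le (one_div_nonneg.mpr hu.le), mul_one_div_cancel hu.ne', one_rpow]

/-- Explicit solution of the continuous flow `E₇`: for `t + α > 0`, the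
functions `x(t) = 1/(t+α)`, `y(t) = β(t+α)^(-ξ)`,
`z(t) = (t+α)(γ - β²(t+α)^(-2ξ))` solve `ẋ = -x²`, `ẏ = -ξxy`,
`ż = 2ξy² + xz`, with `H₇ = y x^(-ξ) = β` and `K₇ = zx + y² = γ`. -/
theorem E7_explicit_solution (α β γ ξ : ℝ) :
    ∀ t : ℝ, t + α > 0 →
      HasDerivAt (fun s : ℝ => 1/(s + α)) (-(1/(t + α))^2) t ∧
      HasDerivAt (fun s : ℝ => β*(s + α)^(-ξ))
        (-ξ*(1/(t + α))*(β*(t + α)^(-ξ))) t ∧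
      HasDerivAt (fun s : ℝ => (s + α)*(γ - β^2*(s + α)^(-(2*ξ))))
        (2*ξ*(β*(t + α)^(-ξ))^2 +
          (1/(t + α))*((t + α)*(γ - β^2*(t + α)^(-(2*ξ))))) t ∧
      (β*(t + α)^(-ξ)) * (1/(t + α))^(-ξ) = β ∧
      ((t + α)*(γ - β^2*(t + α)^(-(2*ξ)))) * (1/(t + α)) +
        (β*(t + α)^(-ξ))^2 = γ := by
  intro t ht
  have hy_sq := mul_rpow_neg_sq β ξ ht.le
  refine ⟨hasDerivAt_one_div_add_const ht.ne', hasDerivAt_const_mul_add_rpow β (-ξ) ht,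
    ?_, ?_, ?_⟩
  · have hz := ((hasDerivAt_id t).add_const α).mul
      ((hasDerivAt_const t γ).sub (hasDerivAt_const_mul_add_rpow (β ^ 2) (-(2 * ξ)) ht))
    refine hz.congr_deriv ?_
    rw [hy_sq, Pi.sub_apply, id]
    field_simp
    ring
  · rw [mul_assoc, rpow_mul_one_div_rpow _ ht, mul_one]
  · rw [hy_sq]
    field_simp
    ring
end

section
/- Fix ε ∈ ℝ and define Ĥ₅(ε)(x, y) = (x² + y²)/(2(1 + ε²x²)) on ℝ². Then for all (x, y) ∈ ℝ²: y(1 + ε²x²)·∂Ĥ₅/∂x(x, y) − x(1 − ε²y²)·∂Ĥ₅/∂y(x, y) = 0, where ∂Ĥ₅/∂x(x, y) = x(1 − ε²y²)/(1 + ε²x²)² and ∂Ĥ₅/∂y(x, y) = y/(1 + ε²x²) are the partial derivatives of Ĥ₅. Since Ĥ₅ is independent of z, this means Ĥ₅(ε) is a Casimir function of the deformed Poisson structure P⁽⁵⁾(ε) on ℝ³ with brackets {x,y} = 0, {y,z} = x(1 − ε²y²), {z,x} = y(1 + ε²x²): all three components of P⁽⁵⁾(ε)·dĤ₅(ε) vanish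 identically. -/
/-!
By the quotient rule `∂Ĥ₅/∂x = x(1 - ε²y²)/(1 + ε²x²)²`, so multiplying by `P₃₁ = y(1 + ε²x²)`
cancels one factor of `1 + ε²x²` and leaves `xy(1 - ε²y²)/(1 + ε²x²) = P₂₃ · ∂Ĥ₅/∂y`.
-/

theorem mul_div_sq_self {K : Type*} [Field K] (p q : K) : p * (q / p ^ 2) = q / p := by
  rcases eq_or_ne p 0 with rfl | hp
  · simp
  · field_simp

theorem hasDerivAt_sq_add_div_two_mul_one_add_mul_sq (a b x : ℝ) (h : 1 + a * x ^ 2 ≠ 0) :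
    HasDerivAt (fun s : ℝ => (s ^ 2 + b) / (2 * (1 + a * s ^ 2)))
      (x * (1 - a * b) / (1 + a * x ^ 2) ^ 2) x := by
  have hnum : HasDerivAt (fun s : ℝ => s ^ 2 + b) (2 * x) x := by
    simpa using (hasDerivAt_pow 2 x).add_const b
  have hden : HasDerivAt (fun s : ℝ => 2 * (1 + a * s ^ 2)) (2 * (a * (2 * x))) x := by
    simpa using (((hasDerivAt_pow 2 x).const_mul a).const_add 1).const_mul 2
  refine (hnum.div hden (mul_ne_zero two_ne_zero h)).congr_deriv ?_
  field_simp
  ring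

theorem hasDerivAt_add_sq_div_two_mul (c d y : ℝ) :
    HasDerivAt (fun s : ℝ => (c + s ^ 2) / (2 * d)) (y / d) y := by
  refine (((hasDerivAt_pow 2 y).const_add c).div_const (2 * d)).congr_deriv ?_
  rw [Nat.cast_ofNat, pow_one, mul_div_mul_left _ _ two_ne_zero]

/-- `Ĥ₅(ε)(x,y) = (x²+y²)/(2(1+ε²x²))` is a Casimir of the deformed Poisson
structure `P⁽⁵⁾(ε)` with `{x,y} = 0`, `{y,z} = x(1-ε²y²)`,
`{z,x} = y(1+ε²x²)`: its partial derivatives are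
`∂Ĥ₅/∂x = x(1-ε²y²)/(1+ε²x²)²` and `∂Ĥ₅/∂y = y/(1+ε²x²)`, and
`y(1+ε²x²)·∂Ĥ₅/∂x - x(1-ε²y²)·∂Ĥ₅/∂y = 0`. -/
theorem H5_casimir_deformed_P5 (ε : ℝ) :
    ∀ x y : ℝ,
      HasDerivAt (fun s : ℝ => (s^2 + y^2)/(2*(1 + ε^2*s^2)))
        (x*(1 - ε^2*y^2)/(1 + ε^2*x^2)^2) x ∧
      HasDerivAt (fun s : ℝ => (x^2 + s^2)/(2*(1 + ε^2*x^2)))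
        (y/(1 + ε^2*x^2)) y ∧
      y*(1 + ε^2*x^2)*(x*(1 - ε^2*y^2)/(1 + ε^2*x^2)^2) -
        x*(1 - ε^2*y^2)*(y/(1 + ε^2*x^2)) = 0 := by
  intro x y
  refine ⟨hasDerivAt_sq_add_div_two_mul_one_add_mul_sq _ _ x (by positivity),
    hasDerivAt_add_sq_div_two_mul _ _ y, ?_⟩
  rw [mul_assoc, mul_div_sq_self]
  ring
end

section
/- Fix ε ∈ ℝ and define K̂₅(ε)(x, y, z) = (z x + y²)/(1 + ε²x²) on ℝ³. Then K̂₅(ε) is a Casimir function of the deformed Poisson structure Q⁽⁵⁾(ε) on ℝ³ with brackets {x,y} = x(1 + ε²x²), {y,z} = z − ε²x(x z + 2y²), {z,x} = 2y(1 + ε²x²): for all (x, y, z) ∈ ℝ³ the following three identities hold, where ∂K̂₅/∂x = (z − ε²x(x z + 2y²))/(1 + ε²x²)², ∂K̂₅/∂y = 2y/(1 + ε²x²), ∂K̂₅/∂z = x/(1 + ε²x²): (i) x(1 + ε²x²)·∂K̂₅/∂y − 2y(1 + ε²x²)·∂K̂₅/∂z = 0; (ii) −x(1 + ε²x²)·∂K̂₅/∂x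 + (z − ε²x(x z + 2y²))·∂K̂₅/∂z = 0; (iii) 2y(1 + ε²x²)·∂K̂₅/∂x − (z − ε²x(x z + 2y²))·∂K̂₅/∂y = 0. -/
/-!
The gradient of `K̂₅(ε)` is `(Q₂₃, Q₃₁, Q₁₂) / (1 + ε²x²)²`. A skew-symmetric 3×3 matrix acts as
the cross product with its axial vector `(Q₂₃, Q₃₁, Q₁₂)`, which kills every multiple of that
vector, so `Q⁽⁵⁾(ε)·dK̂₅ = 0`.
-/

theorem hasDerivAt_mul_add_div_one_add_mul_sq (a b c x : ℝ) (hx : 1 + c * x ^ 2 ≠ 0) :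
    HasDerivAt (fun s : ℝ => (a * s + b) / (1 + c * s ^ 2))
      ((a - c * x * (x * a + 2 * b)) / (1 + c * x ^ 2) ^ 2) x := by
  have hnum : HasDerivAt (fun s : ℝ => a * s + b) a x := by
    simpa using ((hasDerivAt_id x).const_mul a).add_const b
  have hden : HasDerivAt (fun s : ℝ => 1 + c * s ^ 2) (c * (2 * x)) x := by
    simpa using ((hasDerivAt_pow 2 x).const_mul c).const_add 1
  refine (hnum.fun_div hden hx).congr_deriv ?_
  ring

theorem skew_bracket_apply_div_eq_zero {K : Type*} [Field K] (q₁₂ q₂₃ q₃₁ d : K) :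
    q₁₂ * (q₃₁ / d) - q₃₁ * (q₁₂ / d) = 0 ∧
      -q₁₂ * (q₂₃ / d) + q₂₃ * (q₁₂ / d) = 0 ∧
      q₃₁ * (q₂₃ / d) - q₂₃ * (q₃₁ / d) = 0 := by
  refine ⟨?_, ?_, ?_⟩ <;> ring

/-- `K̂₅(ε)(x,y,z) = (zx+y²)/(1+ε²x²)` is a Casimir of the deformed Poisson
structure `Q⁽⁵⁾(ε)` with `{x,y} = x(1+ε²x²)`, `{y,z} = z-ε²x(xz+2y²)`,
`{z,x} = 2y(1+ε²x²)`: with partial derivatives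
`∂K̂₅/∂x = (z-ε²x(xz+2y²))/(1+ε²x²)²`, `∂K̂₅/∂y = 2y/(1+ε²x²)`,
`∂K̂₅/∂z = x/(1+ε²x²)`, the three components of `Q⁽⁵⁾(ε)·dK̂₅` vanish. -/
theorem K5_casimir_deformed_Q5 (ε : ℝ) :
    ∀ x y z : ℝ,
      HasDerivAt (fun s : ℝ => (z*s + y^2)/(1 + ε^2*s^2))
        ((z - ε^2*x*(x*z + 2*y^2))/(1 + ε^2*x^2)^2) x ∧
      HasDerivAt (fun s : ℝ => (z*x + s^2)/(1 + ε^2*x^2))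
        (2*y/(1 + ε^2*x^2)) y ∧
      HasDerivAt (fun s : ℝ => (s*x + y^2)/(1 + ε^2*x^2))
        (x/(1 + ε^2*x^2)) z ∧
      x*(1 + ε^2*x^2)*(2*y/(1 + ε^2*x^2)) -
        2*y*(1 + ε^2*x^2)*(x/(1 + ε^2*x^2)) = 0 ∧
      -(x*(1 + ε^2*x^2))*((z - ε^2*x*(x*z + 2*y^2))/(1 + ε^2*x^2)^2) +
        (z - ε^2*x*(x*z + 2*y^2))*(x/(1 + ε^2*x^2)) = 0 ∧
      2*y*(1 + ε^2*x^2)*((z - ε^2*x*(x*z + 2*y^2))/(1 + ε^2*x^2)^2) -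
        (z - ε^2*x*(x*z + 2*y^2))*(2*y/(1 + ε^2*x^2)) = 0 := by
  intro x y z
  have hD : 1 + ε ^ 2 * x ^ 2 ≠ 0 := by positivity
  have hdy : HasDerivAt (fun s : ℝ => (z * x + s ^ 2) / (1 + ε ^ 2 * x ^ 2))
      (2 * y / (1 + ε ^ 2 * x ^ 2)) y := by
    simpa using ((hasDerivAt_pow 2 y).const_add (z * x)).div_const (1 + ε ^ 2 * x ^ 2)
  have hdz : HasDerivAt (fun s : ℝ => (s * x + y ^ 2) / (1 + ε ^ 2 * x ^ 2))
      (x / (1 + ε ^ 2 * x ^ 2)) z := by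
    simpa using (((hasDerivAt_id z).mul_const x).add_const (y ^ 2)).div_const (1 + ε ^ 2 * x ^ 2)
  refine ⟨hasDerivAt_mul_add_div_one_add_mul_sq z (y ^ 2) (ε ^ 2) x hD, hdy, hdz, ?_⟩
  have hy : 2 * y / (1 + ε ^ 2 * x ^ 2) =
      2 * y * (1 + ε ^ 2 * x ^ 2) / (1 + ε ^ 2 * x ^ 2) ^ 2 := by
    field_simp
  have hx : x / (1 + ε ^ 2 * x ^ 2) = x * (1 + ε ^ 2 * x ^ 2) / (1 + ε ^ 2 * x ^ 2) ^ 2 := by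
    field_simp
  rw [hy, hx]
  exact skew_bracket_apply_div_eq_zero _ _ _ _
end
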